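/- The series ∑_{r=2}^∞ L(1/r²) converges and equals π²/6, where L is the Rogers L-function. -/

import Mathlib

/-!
On `(0, 1)` the Rogers function satisfies `L(x²) = 2 L(x) - 2 L(x / (1 + x))`: both sides have the
same derivative and tend to `0` at `0`. For `x = 1 / (r + 2)` one has `x / (1 + x) = 1 / (r + 3)`,
so the series telescopes and its partial sums `2 L(1/2) - 2 L(1 / (n + 2))` tend to `2 L(1/2)`;
its terms are nonnegative, so it converges absolutely. Letting `x → 1⁻` in the same identity, where
`L(x) → Li₂(1) = ζ(2) = π² / 6` by Abel's theorem, gives `L(1/2) = π² / 12`.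
-/

open Real

noncomputable def Li2 (x : ℝ) : ℝ := -∫ t in (0:ℝ)..x, Real.log (1 - t) / t

noncomputable def rogersL (x : ℝ) : ℝ :=
  Li2 x + (1/2) * Real.log |x| * Real.log (1 - x)

open Filter Topology Set MeasureTheory Interval

/- `dslope (fun s => log (1 - s)) 0` is the integrand `log (1 - t) / t` of `Li2`, extended
continuously to `t = 0`. -/

lemma dslope_log_one_sub_of_ne {t : ℝ} (ht : t ≠ 0) :
    dslope (fun s => log (1 - s)) 0 t = log (1 - t) / t := by
  simp [dslope_of_ne _ ht, slope_def_field]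

lemma continuousOn_dslope_log_one_sub :
    ContinuousOn (dslope (fun s => log (1 - s)) 0) (Iio 1) := by
  have hcont : ContinuousOn (fun s : ℝ => log (1 - s)) (Iio 1) := fun s hs =>
    ((continuous_const.sub continuous_id).continuousAt.log
      (sub_ne_zero.2 (ne_of_gt hs))).continuousWithinAt
  have hdiff : DifferentiableAt ℝ (fun s : ℝ => log (1 - s)) 0 := by fun_prop (disch := norm_num)
  exact (continuousOn_dslope (Iio_mem_nhds one_pos)).2 ⟨hcont, hdiff⟩

lemma Li2_eq_neg_integral_dslope (x : ℝ) :
    Li2 x = -∫ t in (0:ℝ)..x, dslope (fun s => log (1 - s)) 0 t := by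
  rw [Li2]
  congr 1
  refine intervalIntegral.integral_congr_ae ?_
  filter_upwards [Measure.ae_ne volume 0] with t ht _ using (dslope_log_one_sub_of_ne ht).symm

lemma hasDerivAt_Li2 {x : ℝ} (hx : x < 1) :
    HasDerivAt Li2 (-dslope (fun s => log (1 - s)) 0 x) x := by
  have hsub : uIcc 0 x ⊆ Iio 1 := fun t ht => by
    rcases mem_uIcc.1 ht with ⟨_, h⟩ | ⟨_, h⟩ <;> exact mem_Iio.2 (by linarith)
  have hftc := intervalIntegral.integral_hasDerivAt_right
    ((continuousOn_dslope_log_one_sub.mono hsub).intervalIntegrable)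
    (continuousOn_dslope_log_one_sub.stronglyMeasurableAtFilter isOpen_Iio x hx)
    (continuousOn_dslope_log_one_sub.continuousAt (Iio_mem_nhds hx))
  rw [funext Li2_eq_neg_integral_dslope]
  exact hftc.neg

lemma Li2_zero : Li2 0 = 0 := by simp [Li2]

lemma integral_pow_div_succ (x : ℝ) (n : ℕ) :
    ∫ t in (0:ℝ)..x, t ^ n / ((n:ℝ) + 1) = x ^ (n + 1) / ((n:ℝ) + 1) ^ 2 := by
  rw [intervalIntegral.integral_div, integral_pow]
  field_simp
  ring

lemma hasSum_Li2 {x : ℝ} (hx : |x| < 1) :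
    HasSum (fun n : ℕ => x ^ (n + 1) / ((n:ℝ) + 1) ^ 2) (Li2 x) := by
  have hmem : ∀ t ∈ Ι (0:ℝ) x, |t| ≤ |x| := fun t ht => by
    simpa using abs_sub_left_of_mem_uIcc (uIoc_subset_uIcc ht)
  have hsum := intervalIntegral.hasSum_integral_of_dominated_convergence
    (F := fun (n : ℕ) (t : ℝ) => t ^ n / ((n:ℝ) + 1)) (f := fun t => -(log (1 - t) / t))
    (μ := volume) (a := 0) (b := x) (fun n _ => |x| ^ n)
    (fun n => by fun_prop)
    (fun n => ae_of_all _ fun t ht => by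
      rw [norm_div, norm_pow, Real.norm_eq_abs, Real.norm_of_nonneg (by positivity)]
      exact div_le_self (by positivity) (by linarith [n.cast_nonneg (α := ℝ)]) |>.trans
        (pow_le_pow_left₀ (abs_nonneg t) (hmem t ht) n))
    (ae_of_all _ fun _ _ => summable_geometric_of_lt_one (abs_nonneg x) hx)
    intervalIntegrable_const
    (by
      filter_upwards [Measure.ae_ne volume 0] with t ht0 ht
      have := (hasSum_pow_div_log_of_abs_lt_one ((hmem t ht).trans_lt hx)).div_const t
      rw [← neg_div]
      refine this.congr_fun fun n => ?_
      field_simp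
      ring)
  simp only [integral_pow_div_succ, intervalIntegral.integral_neg] at hsum
  exact hsum

lemma Li2_nonneg {x : ℝ} (h0 : 0 ≤ x) (h1 : x < 1) : 0 ≤ Li2 x :=
  (hasSum_Li2 (by rwa [abs_of_nonneg h0])).nonneg fun n => by positivity

lemma tendsto_Li2_nhdsLT_one : Tendsto Li2 (𝓝[<] 1) (𝓝 (π ^ 2 / 6)) := by
  have habel := Real.tendsto_tsum_powerSeries_nhdsWithin_lt hasSum_zeta_two.tendsto_sum_nat
  refine habel.congr' ?_
  filter_upwards [Ioo_mem_nhdsLT (show (0:ℝ) < 1 by norm_num)] with x hx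
  refine ((hasSum_nat_add_iff' 1).mp ?_).tsum_eq
  simpa [div_eq_inv_mul] using hasSum_Li2 (by rw [abs_of_pos hx.1]; exact hx.2)

lemma deriv_log_one_sub_zero : deriv (fun s : ℝ => log (1 - s)) 0 = -1 := by
  have := ((hasDerivAt_id (0:ℝ)).const_sub 1).log (by norm_num)
  simpa using this.deriv

lemma tendsto_log_mul_log_one_sub_nhdsGT_zero :
    Tendsto (fun x => log x * log (1 - x)) (𝓝[>] 0) (𝓝 0) := by
  have hxlog : Tendsto (fun x => x * log x) (𝓝[>] 0) (𝓝 0) := by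
    simpa using (Real.continuous_mul_log.tendsto 0).mono_left nhdsWithin_le_nhds
  have hslope : Tendsto (dslope (fun s => log (1 - s)) 0) (𝓝[>] 0) (𝓝 (-1)) := by
    have := (continuousOn_dslope_log_one_sub.continuousAt (Iio_mem_nhds one_pos)).tendsto
    rw [dslope_same, deriv_log_one_sub_zero] at this
    exact this.mono_left nhdsWithin_le_nhds
  have hprod := hxlog.mul hslope
  rw [zero_mul] at hprod
  refine hprod.congr' ?_
  filter_upwards [self_mem_nhdsWithin] with x (hx : 0 < x)
  rw [dslope_log_one_sub_of_ne hx.ne']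
  field_simp

lemma tendsto_one_sub_nhdsLT_one : Tendsto (fun x : ℝ => 1 - x) (𝓝[<] 1) (𝓝[>] 0) := by
  refine tendsto_nhdsWithin_iff.2 ⟨?_, ?_⟩
  · have := (continuous_sub_left (1:ℝ)).tendsto 1
    rw [sub_self] at this
    exact this.mono_left nhdsWithin_le_nhds
  · filter_upwards [self_mem_nhdsWithin] with x (hx : x < 1) using sub_pos.2 hx

lemma tendsto_log_mul_log_one_sub_nhdsLT_one :
    Tendsto (fun x => log x * log (1 - x)) (𝓝[<] 1) (𝓝 0) :=
  (tendsto_log_mul_log_one_sub_nhdsGT_zero.comp tendsto_one_sub_nhdsLT_one).congr fun x => by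
    simp [mul_comm]

lemma rogersL_eq (x : ℝ) : rogersL x = Li2 x + log x * log (1 - x) / 2 := by
  rw [rogersL, log_abs]
  ring

lemma rogersL_nonneg {x : ℝ} (h0 : 0 < x) (h1 : x < 1) : 0 ≤ rogersL x := by
  rw [rogersL_eq]
  have hlog : 0 ≤ log x * log (1 - x) :=
    mul_nonneg_of_nonpos_of_nonpos (log_nonpos h0.le h1.le) (log_nonpos (by linarith) (by linarith))
  linarith [Li2_nonneg h0.le h1]

lemma hasDerivAt_rogersL {x : ℝ} (h0 : 0 < x) (h1 : x < 1) :
    HasDerivAt rogersL (-(log (1 - x) / x + log x / (1 - x)) / 2) x := by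
  have hsub : 1 - x ≠ 0 := by linarith
  have hLi2 := hasDerivAt_Li2 h1
  rw [dslope_log_one_sub_of_ne h0.ne'] at hLi2
  have hprod := (hasDerivAt_log h0.ne').mul (((hasDerivAt_id x).const_sub 1).log hsub)
  rw [funext rogersL_eq]
  refine (hLi2.add (hprod.div_const 2)).congr_deriv ?_
  simp only [id]
  field_simp
  ring

lemma tendsto_rogersL_nhdsGT_zero : Tendsto rogersL (𝓝[>] 0) (𝓝 0) := by
  have hLi2 : Tendsto Li2 (𝓝[>] 0) (𝓝 0) := by
    simpa [Li2_zero] using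
      (hasDerivAt_Li2 one_pos).continuousAt.tendsto.mono_left nhdsWithin_le_nhds
  simpa [funext rogersL_eq] using hLi2.add (tendsto_log_mul_log_one_sub_nhdsGT_zero.div_const 2)

lemma tendsto_rogersL_nhdsLT_one : Tendsto rogersL (𝓝[<] 1) (𝓝 (π ^ 2 / 6)) := by
  simpa [funext rogersL_eq] using
    tendsto_Li2_nhdsLT_one.add (tendsto_log_mul_log_one_sub_nhdsLT_one.div_const 2)

lemma hasDerivAt_rogersL_sq_sub {x : ℝ} (h0 : 0 < x) (h1 : x < 1) :
    HasDerivAt (fun y => rogersL (y ^ 2) - 2 * rogersL y + 2 * rogersL (y / (1 + y))) 0 x := by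
  have hx1 : 0 < 1 + x := by linarith
  have hsq := HasDerivAt.comp (h := fun y => y ^ 2) x
    (hasDerivAt_rogersL (pow_pos h0 2) (pow_lt_one₀ h0.le h1 two_ne_zero)) (hasDerivAt_pow 2 x)
  have hfrac := HasDerivAt.comp (h := fun y => y / (1 + y)) x
    (hasDerivAt_rogersL (div_pos h0 hx1) ((div_lt_one hx1).2 (by linarith)))
    ((hasDerivAt_id x).div ((hasDerivAt_id x).const_add 1) hx1.ne')
  refine ((hsq.sub ((hasDerivAt_rogersL h0 h1).const_mul 2)).add (hfrac.const_mul 2)).congr_deriv ?_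
  have hlog_sq : log (x ^ 2) = 2 * log x := by simp [log_pow]
  have hlog_one_sub_sq : log (1 - x ^ 2) = log (1 - x) + log (1 + x) := by
    rw [← log_mul (by linarith) hx1.ne']
    ring_nf
  have hlog_frac : log (x / (1 + x)) = log x - log (1 + x) := log_div h0.ne' hx1.ne'
  have hlog_one_sub_frac : log (1 - x / (1 + x)) = -log (1 + x) := by
    rw [show 1 - x / (1 + x) = (1 + x)⁻¹ by field_simp; ring, log_inv]
  simp only [id, hlog_sq, hlog_one_sub_sq, hlog_frac, hlog_one_sub_frac]
  have h1x : 1 - x ≠ 0 := by linarith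
  have h1x_sq : 1 - x ^ 2 ≠ 0 := by nlinarith
  field_simp
  ring

lemma tendsto_rogersL_sq_sub_nhdsGT_zero :
    Tendsto (fun y => rogersL (y ^ 2) - 2 * rogersL y + 2 * rogersL (y / (1 + y))) (𝓝[>] 0)
      (𝓝 0) := by
  have hsq : Tendsto (fun y : ℝ => y ^ 2) (𝓝[>] 0) (𝓝[>] 0) :=
    tendsto_nhdsWithin_of_tendsto_nhds_of_eventually_within _
      (by simpa using ((continuous_pow 2).tendsto (0:ℝ)).mono_left nhdsWithin_le_nhds)
      (by filter_upwards [self_mem_nhdsWithin] with y (hy : 0 < y) using pow_pos hy 2)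
  have hfrac : Tendsto (fun y : ℝ => y / (1 + y)) (𝓝[>] 0) (𝓝[>] 0) := by
    have hcont : ContinuousAt (fun y : ℝ => y / (1 + y)) 0 := by fun_prop (disch := norm_num)
    refine tendsto_nhdsWithin_of_tendsto_nhds_of_eventually_within _
      (by simpa using hcont.tendsto.mono_left nhdsWithin_le_nhds) ?_
    filter_upwards [self_mem_nhdsWithin] with y (hy : 0 < y) using div_pos hy (by linarith)
  simpa using ((tendsto_rogersL_nhdsGT_zero.comp hsq).sub
    (tendsto_rogersL_nhdsGT_zero.const_mul 2)).add
    ((tendsto_rogersL_nhdsGT_zero.comp hfrac).const_mul 2)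

lemma rogersL_sq {x : ℝ} (h0 : 0 < x) (h1 : x < 1) :
    rogersL (x ^ 2) = 2 * rogersL x - 2 * rogersL (x / (1 + x)) := by
  set F := fun y => rogersL (y ^ 2) - 2 * rogersL y + 2 * rogersL (y / (1 + y)) with hF
  have hconst : ∀ y ∈ Ioo (0:ℝ) 1, F y = F x := fun y hy =>
    isOpen_Ioo.is_const_of_deriv_eq_zero isPreconnected_Ioo
      (fun z hz => (hasDerivAt_rogersL_sq_sub hz.1 hz.2).differentiableAt.differentiableWithinAt)
      (fun z hz => (hasDerivAt_rogersL_sq_sub hz.1 hz.2).deriv) hy ⟨h0, h1⟩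
  have hFx : F x = 0 := by
    refine tendsto_nhds_unique (tendsto_const_nhds.congr' ?_) tendsto_rogersL_sq_sub_nhdsGT_zero
    filter_upwards [Ioo_mem_nhdsGT (show (0:ℝ) < 1 by norm_num)] with y hy using (hconst y hy).symm
  simp only [hF] at hFx
  linarith

lemma rogersL_half : rogersL (1 / 2) = π ^ 2 / 12 := by
  have hsq : Tendsto (fun x : ℝ => x ^ 2) (𝓝[<] 1) (𝓝[<] 1) :=
    tendsto_nhdsWithin_of_tendsto_nhds_of_eventually_within _
      (by simpa using ((continuous_pow 2).tendsto (1:ℝ)).mono_left nhdsWithin_le_nhds)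
      (by
        filter_upwards [Ioo_mem_nhdsLT (show (0:ℝ) < 1 by norm_num)] with x hx
        exact pow_lt_one₀ hx.1.le hx.2 two_ne_zero)
  have hfrac : Tendsto (fun x : ℝ => x / (1 + x)) (𝓝[<] 1) (𝓝 (1 / 2)) := by
    have : ContinuousAt (fun x : ℝ => x / (1 + x)) 1 := by fun_prop (disch := norm_num)
    simpa [one_add_one_eq_two] using this.tendsto.mono_left nhdsWithin_le_nhds
  have hhalf : Tendsto rogersL (𝓝 (1 / 2)) (𝓝 (rogersL (1 / 2))) :=
    (hasDerivAt_rogersL (by norm_num) (by norm_num)).continuousAt.tendsto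
  have hrhs := (tendsto_rogersL_nhdsLT_one.const_mul 2).sub ((hhalf.comp hfrac).const_mul 2)
  have hlim := tendsto_nhds_unique (tendsto_rogersL_nhdsLT_one.comp hsq) (hrhs.congr' ?_)
  · linarith
  · filter_upwards [Ioo_mem_nhdsLT (show (0:ℝ) < 1 by norm_num)] with x hx
    exact (rogersL_sq hx.1 hx.2).symm

lemma hasSum_sub_succ_of_nonneg {f g : ℕ → ℝ} {l : ℝ} (hf : ∀ n, 0 ≤ f n)
    (hfg : ∀ n, f n = g n - g (n + 1)) (hg : Tendsto g atTop (𝓝 l)) : HasSum f (g 0 - l) := by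
  refine (hasSum_iff_tendsto_nat_of_nonneg hf _).2 ?_
  simp_rw [hfg, Finset.sum_range_sub']
  exact tendsto_const_nhds.sub hg

lemma mem_Ioo_one_div_natCast_add_two (r : ℕ) : 1 / ((r : ℝ) + 2) ∈ Ioo 0 1 :=
  ⟨by positivity, (div_lt_one (by positivity)).2 (by linarith [r.cast_nonneg (α := ℝ)])⟩

lemma tendsto_one_div_natCast_add_two :
    Tendsto (fun r : ℕ => 1 / ((r : ℝ) + 2)) atTop (𝓝[>] 0) := by
  have hden : Tendsto (fun r : ℕ => (r : ℝ) + 2) atTop atTop :=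
    tendsto_natCast_atTop_atTop.atTop_add tendsto_const_nhds
  exact tendsto_nhdsWithin_of_tendsto_nhds_of_eventually_within _
    (by simpa [Function.comp_def] using tendsto_inv_atTop_zero.comp hden)
    (Eventually.of_forall fun r => (mem_Ioo_one_div_natCast_add_two r).1)

lemma rogersL_one_div_natCast_add_two_sq (r : ℕ) :
    rogersL (1 / ((r : ℝ) + 2) ^ 2) =
      2 * rogersL (1 / ((r : ℝ) + 2)) - 2 * rogersL (1 / (((r + 1 : ℕ) : ℝ) + 2)) := by
  have hfrac : 1 / ((r : ℝ) + 2) / (1 + 1 / ((r : ℝ) + 2)) = 1 / (((r + 1 : ℕ) : ℝ) + 2) := by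
    push_cast
    field_simp
    ring
  obtain ⟨h0, h1⟩ := mem_Ioo_one_div_natCast_add_two r
  rw [← hfrac, ← rogersL_sq h0 h1, one_div_pow]

theorem rogersL_series :
    HasSum (fun r : ℕ => rogersL (1 / ((r : ℝ) + 2) ^ 2)) (π ^ 2 / 6) := by
  have hnonneg : ∀ r : ℕ, 0 ≤ rogersL (1 / ((r : ℝ) + 2) ^ 2) := fun r => by
    obtain ⟨h0, h1⟩ := mem_Ioo_one_div_natCast_add_two r
    simpa only [one_div_pow] using rogersL_nonneg (pow_pos h0 2) (pow_lt_one₀ h0.le h1 two_ne_zero)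
  have hlim : Tendsto (fun r : ℕ => 2 * rogersL (1 / ((r : ℝ) + 2))) atTop (𝓝 0) := by
    simpa using (tendsto_rogersL_nhdsGT_zero.comp tendsto_one_div_natCast_add_two).const_mul 2
  convert hasSum_sub_succ_of_nonneg hnonneg rogersL_one_div_natCast_add_two_sq hlim using 1
  norm_num [rogersL_half]
  ring
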